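/- arXiv:0708.0269 — 2 statements merged into one kernel-verified Lean document; each statement's English description precedes it below -/
import Mathlib

section
/- Let n > 2 and 0 < β < 1. The radial function ψ(r) = (1-β^2)^{(n-2)/4}(cosh r - β)^{1-n/2} on [0,∞) satisfies the equation Δ_r ψ - (n(n-2)/4) ψ = (n(n-2)/4) ψ^{(n+2)/(n-2)}, where Δ_r f = -(sinh r)^{1-n} ∂/∂r [ (sinh r)^{n-1} ∂f/∂r ] is the radial hyperbolic Laplacian. -/
/-!
Write `ψ r = C * g (cosh r)` with `g x = (x - β) ^ p`, `p = 1 - n / 2`. For any `g`, the radial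
Laplacian of `g ∘ cosh` is `-((x² - 1) g''(x) + n x g'(x))` at `x = cosh r`; for the power `g` this
equals `n(n-2)/4 · (x - β)^(p-2) · ((x - β)² + 1 - β²)`. The first summand is `n(n-2)/4 · ψ`, and
since `p · (n+2)/(n-2) = p - 2` and `(n-2)/4 · (n+2)/(n-2) = (n-2)/4 + 1`, the second one is
`n(n-2)/4 · ψ ^ ((n+2)/(n-2))`.
-/

/-- The radial hyperbolic Laplacian (geometer's sign) on `H^n`:
`Δ_r f (r) = -(sinh r)^{1-n} d/dr [(sinh r)^{n-1} f'(r)]`. -/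
noncomputable def radialHypLap (n : ℕ) (f : ℝ → ℝ) (r : ℝ) : ℝ :=
  -(deriv (fun s => Real.sinh s ^ (n - 1) * deriv f s) r) / Real.sinh r ^ (n - 1)

open Real

theorem radialHypLap_const_mul (n : ℕ) (c : ℝ) (f : ℝ → ℝ) (r : ℝ) :
    radialHypLap n (fun s => c * f s) r = c * radialHypLap n f r := by
  simp only [radialHypLap, deriv_const_mul_field', mul_left_comm _ c]
  ring

theorem radialHypLap_comp_cosh {n : ℕ} (hn : n ≠ 0) {g g' g'' : ℝ → ℝ}
    (hg : ∀ x, 1 ≤ x → HasDerivAt g (g' x) x) (hg' : ∀ x, 1 ≤ x → HasDerivAt g' (g'' x) x)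
    {r : ℝ} (hr : r ≠ 0) :
    radialHypLap n (fun s => g (cosh s)) r
      = -(sinh r ^ 2 * g'' (cosh r) + n * cosh r * g' (cosh r)) := by
  obtain ⟨m, rfl⟩ : ∃ m, n = m + 1 := Nat.exists_eq_add_one.2 (Nat.pos_of_ne_zero hn)
  have hderiv : deriv (fun s => g (cosh s)) = fun s => g' (cosh s) * sinh s :=
    funext fun s => ((hg _ (one_le_cosh s)).comp s (hasDerivAt_cosh s)).deriv
  have hflux : HasDerivAt (fun s => sinh s ^ (m + 1) * g' (cosh s))
      (((m + 1 : ℕ) : ℝ) * sinh r ^ m * cosh r * g' (cosh r)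
        + sinh r ^ (m + 1) * (g'' (cosh r) * sinh r)) r := by
    refine (((hasDerivAt_sinh r).fun_pow (m + 1)).mul
      ((hg' _ (one_le_cosh r)).comp r (hasDerivAt_cosh r))).congr_deriv ?_
    simp
  have hsinh : sinh r ^ m ≠ 0 := pow_ne_zero _ (sinh_ne_zero.2 hr)
  simp only [radialHypLap, hderiv, Nat.add_sub_cancel]
  rw [show (fun s => sinh s ^ m * (g' (cosh s) * sinh s)) = fun s => sinh s ^ (m + 1) * g' (cosh s)
    from funext fun s => by ring, hflux.deriv]
  field_simp
  ring

theorem radialHypLap_cosh_sub_rpow {n : ℕ} (hn : n ≠ 0) {β : ℝ} (hβ : β < 1) (p : ℝ) {r : ℝ}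
    (hr : r ≠ 0) :
    radialHypLap n (fun s => (cosh s - β) ^ p) r
      = -p * (cosh r - β) ^ (p - 2) * ((p - 1) * sinh r ^ 2 + n * cosh r * (cosh r - β)) := by
  have hpos : ∀ x, 1 ≤ x → x - β ≠ 0 := fun x hx => by linarith
  have hg : ∀ x, 1 ≤ x → HasDerivAt (fun x => (x - β) ^ p) (p * (x - β) ^ (p - 1)) x :=
    fun x hx => by simpa using ((hasDerivAt_id x).sub_const β).rpow_const (Or.inl (hpos x hx))
  have hg' : ∀ x, 1 ≤ x → HasDerivAt (fun x => p * (x - β) ^ (p - 1))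
      (p * ((p - 1) * (x - β) ^ (p - 1 - 1))) x :=
    fun x hx => by
      simpa using (((hasDerivAt_id x).sub_const β).rpow_const (Or.inl (hpos x hx))).const_mul p
  rw [radialHypLap_comp_cosh hn hg hg' hr, show p - 1 - 1 = p - 2 by ring,
    show p - 1 = p - 2 + 1 by ring, rpow_add_one (hpos _ (one_le_cosh r))]
  ring

theorem radial_EL_order_one (n : ℕ) (hn : 2 < n) (β : ℝ) (hβ0 : 0 < β) (hβ1 : β < 1)
    (ψ : ℝ → ℝ)
    (hψ : ψ = fun r => (1 - β ^ 2) ^ (((n : ℝ) - 2) / 4) *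
      (Real.cosh r - β) ^ (1 - (n : ℝ) / 2)) :
    ∀ r > (0 : ℝ),
      radialHypLap n ψ r - ((n : ℝ) * ((n : ℝ) - 2) / 4) * ψ r
        = ((n : ℝ) * ((n : ℝ) - 2) / 4) * ψ r ^ (((n : ℝ) + 2) / ((n : ℝ) - 2)) := by
  subst hψ
  intro r hr
  have hN : (n : ℝ) - 2 ≠ 0 := by
    have : (2 : ℝ) < n := by exact_mod_cast hn
    linarith
  have hD : 0 < 1 - β ^ 2 := by nlinarith
  have hu : 0 < cosh r - β := by linarith [one_le_cosh r]
  rw [radialHypLap_const_mul, radialHypLap_cosh_sub_rpow (by omega) hβ1 _ hr.ne']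
  beta_reduce
  set C := (1 - β ^ 2) ^ (((n : ℝ) - 2) / 4)
  set p := 1 - (n : ℝ) / 2
  set u := cosh r - β
  have hpow : (C * u ^ p) ^ (((n : ℝ) + 2) / ((n : ℝ) - 2)) = C * (1 - β ^ 2) * u ^ (p - 2) := by
    rw [mul_rpow (by positivity) (by positivity), ← rpow_mul hD.le, ← rpow_mul hu.le,
      ← rpow_add_one hD.ne']
    congr 2 <;> field_simp <;> ring
  have hsplit : u ^ p = u ^ (p - 2) * u ^ 2 := by
    rw [← rpow_natCast, ← rpow_add hu]
    norm_num
  rw [hpow, hsplit, sinh_sq, show cosh r = u + β by ring]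
  ring
end

section
/- Let n > 4 and 0 < β < 1, and let ψ(r) = (1-β^2)^{(n-4)/4}(cosh r - β)^{2-n/2}. Then ψ satisfies Δ_r^2 ψ - ((n^2-2n-4)/2) Δ_r ψ + (n(n-4)(n^2-4)/16) ψ = (n(n-4)(n^2-4)/16) ψ^{(n+4)/(n-4)} for all r > 0. -/
/-!
In the variable `u = cosh r - β` the radial Laplacian is the second-order operator
`-(n (u + β) ∂ᵤ + ((u + β)² - 1) ∂ᵤ²)`, which maps `u ^ q` into the span of `u ^ q`, `u ^ (q - 1)`,
`u ^ (q - 2)`. Hence with `p = 2 - n / 2` the left-hand side is a combination of `u ^ p`, …,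
`u ^ (p - 4)`, in which all coefficients but the last cancel; and `u ^ (p - 4)` is, up to the
constant, `ψ ^ ((n + 4) / (n - 4))`, because `p (n + 4) / (n - 4) = p - 4`.
-/

open Real Filter Topology

lemma cosh_sub_pos {β : ℝ} (hβ : β < 1) (r : ℝ) : 0 < cosh r - β :=
  sub_pos.2 (hβ.trans_le (one_le_cosh r))

lemma radialHypLap_congr {n : ℕ} {f g : ℝ → ℝ} {r : ℝ} (h : f =ᶠ[𝓝 r] g) :
    radialHypLap n f r = radialHypLap n g r := by
  have hflux : (fun s => sinh s ^ (n - 1) * deriv f s) =ᶠ[𝓝 r]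
      fun s => sinh s ^ (n - 1) * deriv g s :=
    h.deriv.mono fun s hs => congrArg (sinh s ^ (n - 1) * ·) hs
  unfold radialHypLap
  rw [hflux.deriv_eq]

/-- The radial Laplacian in the variable `u = cosh r - β`, for a profile with derivatives
`g'` and `g''`. -/
noncomputable def coshSubLap (n : ℕ) (β : ℝ) (g' g'' : ℝ → ℝ) (u : ℝ) : ℝ :=
  -(n * (u + β) * g' u + ((u + β) ^ 2 - 1) * g'' u)

lemma radialHypLap_comp_cosh_sub {n : ℕ} (hn : 1 ≤ n) {β : ℝ} (hβ : β < 1)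
    {g g' g'' : ℝ → ℝ} (hg : ∀ x > 0, HasDerivAt g (g' x) x)
    (hg' : ∀ x > 0, HasDerivAt g' (g'' x) x) {r : ℝ} (hr : r ≠ 0) :
    radialHypLap n (fun s => g (cosh s - β)) r
      = coshSubLap n β g' g'' (cosh r - β) := by
  have hsinh_pow (s : ℝ) : sinh s ^ n = sinh s ^ (n - 1) * sinh s := by
    rw [← pow_succ, Nat.sub_add_cancel hn]
  have hderiv : deriv (fun s => g (cosh s - β)) = fun s => g' (cosh s - β) * sinh s :=
    funext fun s => ((hg _ (cosh_sub_pos hβ s)).comp s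
      ((hasDerivAt_cosh s).sub_const β)).deriv
  have hflux : (fun s => sinh s ^ (n - 1) * (g' (cosh s - β) * sinh s))
      = fun s => sinh s ^ n * g' (cosh s - β) := by
    funext s; rw [hsinh_pow]; ring
  have hflux_deriv : HasDerivAt (fun s => sinh s ^ n * g' (cosh s - β))
      (n * sinh r ^ (n - 1) * cosh r * g' (cosh r - β)
        + sinh r ^ n * (g'' (cosh r - β) * sinh r)) r :=
    ((hasDerivAt_sinh r).pow n).mul
      ((hg' _ (cosh_sub_pos hβ r)).comp r ((hasDerivAt_cosh r).sub_const β))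
  unfold radialHypLap
  rw [hderiv, hflux, hflux_deriv.deriv, hsinh_pow, coshSubLap, sub_add_cancel, ← sinh_sq]
  field_simp [pow_ne_zero (n - 1) (sinh_ne_zero.2 hr)]

noncomputable def rpowComb (q c₀ c₁ c₂ x : ℝ) : ℝ :=
  c₀ * x ^ q + c₁ * x ^ (q - 1) + c₂ * x ^ (q - 2)

lemma hasDerivAt_rpowComb (q c₀ c₁ c₂ : ℝ) {x : ℝ} (hx : 0 < x) :
    HasDerivAt (rpowComb q c₀ c₁ c₂)
      (rpowComb (q - 1) (c₀ * q) (c₁ * (q - 1)) (c₂ * (q - 2)) x) x := by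
  have hmon (c a : ℝ) : HasDerivAt (fun y => c * y ^ a) (c * (a * x ^ (a - 1))) x :=
    (hasDerivAt_rpow_const (Or.inl hx.ne')).const_mul c
  refine (((hmon c₀ q).add (hmon c₁ (q - 1))).add (hmon c₂ (q - 2))).congr_deriv ?_
  rw [rpowComb, show q - 2 - 1 = q - 1 - 2 by ring]
  ring

lemma radialHypLap_rpow_cosh_sub {n : ℕ} (hn : 1 ≤ n) {β : ℝ} (hβ : β < 1) (c q : ℝ)
    {r : ℝ} (hr : r ≠ 0) :
    radialHypLap n (fun s => c * (cosh s - β) ^ q) r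
      = rpowComb q (-c * q * (n + q - 1)) (-c * q * β * (n + 2 * q - 2))
          (-c * q * (q - 1) * (β ^ 2 - 1)) (cosh r - β) := by
  have hmon : (fun s => c * (cosh s - β) ^ q) = fun s => rpowComb q c 0 0 (cosh s - β) := by
    funext s; simp [rpowComb]
  rw [hmon, radialHypLap_comp_cosh_sub hn hβ (fun x hx => hasDerivAt_rpowComb q c 0 0 hx)
    (fun x hx => hasDerivAt_rpowComb _ _ _ _ hx) hr]
  have hu := cosh_sub_pos hβ r
  generalize cosh r - β = u at hu ⊢
  simp only [coshSubLap, rpowComb, rpow_sub hu, rpow_one, rpow_ofNat]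
  field_simp
  ring

lemma mul_rpow_conformal_exponent {m c u : ℝ} (hm : m ≠ 4) (hc : 0 < c) (hu : 0 ≤ u) :
    (c ^ ((m - 4) / 4) * u ^ (2 - m / 2)) ^ ((m + 4) / (m - 4))
      = c ^ ((m - 4) / 4) * c ^ 2 * u ^ (2 - m / 2 - 4) := by
  have hm' : m - 4 ≠ 0 := sub_ne_zero.2 hm
  have hc_exp : (m - 4) / 4 * ((m + 4) / (m - 4)) = (m - 4) / 4 + 2 := by field_simp; ring
  have hu_exp : (2 - m / 2) * ((m + 4) / (m - 4)) = 2 - m / 2 - 4 := by field_simp; ring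
  rw [mul_rpow (rpow_nonneg hc.le _) (rpow_nonneg hu _), ← rpow_mul hc.le, ← rpow_mul hu,
    hc_exp, hu_exp, rpow_add hc, rpow_two]

theorem radial_EL_order_two (n : ℕ) (hn : 4 < n) (β : ℝ) (hβ0 : 0 < β) (hβ1 : β < 1)
    (ψ : ℝ → ℝ)
    (hψ : ψ = fun r => (1 - β ^ 2) ^ (((n : ℝ) - 4) / 4) *
      (Real.cosh r - β) ^ (2 - (n : ℝ) / 2)) :
    ∀ r > (0 : ℝ),
      radialHypLap n (radialHypLap n ψ) r
        - (((n : ℝ) ^ 2 - 2 * n - 4) / 2) * radialHypLap n ψ r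
        + ((n : ℝ) * ((n : ℝ) - 4) * ((n : ℝ) ^ 2 - 4) / 16) * ψ r
      = ((n : ℝ) * ((n : ℝ) - 4) * ((n : ℝ) ^ 2 - 4) / 16) *
          ψ r ^ (((n : ℝ) + 4) / ((n : ℝ) - 4)) := by
  intro r hr
  have hn1 : 1 ≤ n := by omega
  have hb : 0 < 1 - β ^ 2 := by nlinarith
  have hu := cosh_sub_pos hβ1 r
  rw [congrFun hψ r, mul_rpow_conformal_exponent (by exact_mod_cast hn.ne') hb hu.le]
  set C := (1 - β ^ 2) ^ (((n : ℝ) - 4) / 4)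
  set p : ℝ := 2 - (n : ℝ) / 2 with hp
  have hΔψ (s : ℝ) (hs : s ≠ 0) : radialHypLap n ψ s
      = rpowComb p (-C * p * (n + p - 1)) (-C * p * β * (n + 2 * p - 2))
          (-C * p * (p - 1) * (β ^ 2 - 1)) (cosh s - β) := by
    rw [hψ, radialHypLap_rpow_cosh_sub hn1 hβ1 C p hs]
  rw [radialHypLap_congr ((eventually_ne_nhds hr.ne').mono hΔψ),
    radialHypLap_comp_cosh_sub hn1 hβ1 (fun x hx => hasDerivAt_rpowComb _ _ _ _ hx)
      (fun x hx => hasDerivAt_rpowComb _ _ _ _ hx) hr.ne', hΔψ r hr.ne']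
  generalize cosh r - β = u at hu ⊢
  simp only [coshSubLap, rpowComb, rpow_sub hu, rpow_one, rpow_ofNat]
  field_simp
  rw [hp]
  ring
end
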